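/- Let M be a symmetric real p×p matrix, Σ a symmetric positive definite real p×p matrix, Σ^{1/2} the unique symmetric positive definite square root of Σ, and 1 ≤ d ≤ p. Then the supremum of trace(Bᵀ M B) over all real p×d matrices B with Bᵀ Σ B = I_d is attained, and it equals the sum of the d largest eigenvalues (counted with multiplicity) of the symmetric matrix Σ^{-1/2} M Σ^{-1/2}. -/

import Mathlib

/-!
Substituting `C = Σ^{1/2} B` and then rotating by the eigenvectors of `Σ^{-1/2} M Σ^{-1/2}` turns
the problem into maximising `trace (Pᵀ D P)` over `P` with orthonormal columns, where `D` is the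
diagonal matrix of eigenvalues. This trace is `∑ λᵢ uᵢ` with `uᵢ` the diagonal of the orthogonal
projection `P Pᵀ`, so `0 ≤ uᵢ ≤ 1` and `∑ uᵢ = d`; such a weighted sum is largest when all the
weight sits on the `d` largest `λᵢ`, and `d` coordinate vectors put it there.
-/

open Matrix Finset

theorem sum_mul_le_sum_of_threshold {ι : Type*} [Fintype ι] (s : Finset ι) {μ u : ι → ℝ} (t : ℝ)
    (hs : ∀ i ∈ s, t ≤ μ i) (hsc : ∀ i ∉ s, μ i ≤ t) (hu0 : ∀ i, 0 ≤ u i) (hu1 : ∀ i, u i ≤ 1)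
    (hu : ∑ i, u i = #s) :
    ∑ i, μ i * u i ≤ ∑ i ∈ s, μ i := by
  classical
  have key : ∀ i, μ i * u i ≤ (if i ∈ s then μ i else 0) + t * (u i - if i ∈ s then 1 else 0) := by
    intro i
    by_cases hi : i ∈ s
    · simp only [hi, if_true]
      nlinarith [hs i hi, hu1 i]
    · simp only [hi, if_false]
      nlinarith [hsc i hi, hu0 i]
  calc ∑ i, μ i * u i
      ≤ ∑ i, ((if i ∈ s then μ i else 0) + t * (u i - if i ∈ s then 1 else 0)) :=
        sum_le_sum fun i _ => key i
    _ = ∑ i ∈ s, μ i + t * (∑ i, u i - #s) := by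
        simp [sum_add_distrib, ← mul_sum, sum_sub_distrib, sum_ite_mem]
    _ = ∑ i ∈ s, μ i := by rw [hu, sub_self, mul_zero, add_zero]

theorem Antitone.sum_mul_le_sum_filter_val_lt {p d : ℕ} (hdp : d ≤ p) {μ u : Fin p → ℝ}
    (hμ : Antitone μ) (hu0 : ∀ i, 0 ≤ u i) (hu1 : ∀ i, u i ≤ 1) (hu : ∑ i, u i = d) :
    ∑ i, μ i * u i ≤ ∑ i ∈ univ.filter (fun i : Fin p => (i : ℕ) < d), μ i := by
  -- Any value between `μ (d - 1)` and `μ d` separates; if `d = p`, any lower bound of `μ` does.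
  refine sum_mul_le_sum_of_threshold _ (if h : d < p then μ ⟨d, h⟩ else ⨅ i, μ i) ?_ ?_ hu0 hu1 ?_
  · intro i hi
    split_ifs with h
    · exact hμ (Fin.mk_le_mk.2 (mem_filter.1 hi).2.le)
    · exact ciInf_le (Finite.bddBelow_range μ) i
  · intro i hi
    have hdi : d ≤ i := by simpa using hi
    rw [dif_pos (hdi.trans_lt i.2)]
    exact hμ (Fin.mk_le_mk.2 hdi)
  · rw [hu, Fin.card_filter_val_lt, min_eq_right hdp]

theorem Fin.sum_filter_val_lt {M : Type*} [AddCommMonoid M] {p d : ℕ} (hdp : d ≤ p)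
    (f : Fin p → M) :
    ∑ i ∈ univ.filter (fun i : Fin p => (i : ℕ) < d), f i = ∑ k : Fin d, f (Fin.castLE hdp k) :=
  sum_bij' (fun i hi => ⟨i, (mem_filter.1 hi).2⟩) (fun k _ => Fin.castLE hdp k)
    (by simp) (by simp) (by simp) (by simp) (by simp)

namespace Matrix

def traceRayleighValues {n : Type*} [Fintype n] (M S : Matrix n n ℝ) (m : Type*) [Fintype m]
    [DecidableEq m] : Set ℝ :=
  {r | ∃ B : Matrix n m ℝ, Bᵀ * S * B = 1 ∧ r = (Bᵀ * M * B).trace}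

variable {n m : Type*}

lemma transpose_mul_mul_mul_conj [Fintype n] (A : Matrix n n ℝ) (B : Matrix n m ℝ)
    (X : Matrix n n ℝ) :
    (A * B)ᵀ * X * (A * B) = Bᵀ * (Aᵀ * X * A) * B := by
  simp only [transpose_mul, Matrix.mul_assoc]

lemma trace_transpose_mul_diagonal_mul [Fintype n] [Fintype m] [DecidableEq n] (w : n → ℝ)
    (P : Matrix n m ℝ) :
    (Pᵀ * diagonal w * P).trace = ∑ i, w i * (P * Pᵀ) i i := by
  rw [trace_mul_cycle, trace_mul_comm]
  simp [trace, diagonal_mul]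

lemma mul_transpose_apply_self_nonneg [Fintype m] (P : Matrix n m ℝ) (i : n) :
    0 ≤ (P * Pᵀ) i i := by
  simpa [mul_apply] using sum_nonneg fun k _ => mul_self_nonneg (P i k)

lemma mul_transpose_apply_self_le_one [Fintype n] [Fintype m] [DecidableEq m] {P : Matrix n m ℝ}
    (hP : Pᵀ * P = 1) (i : n) : (P * Pᵀ) i i ≤ 1 := by
  set Q := P * Pᵀ
  have hQQ : Q * Q = Q := by
    rw [Matrix.mul_assoc, ← Matrix.mul_assoc Pᵀ, hP, Matrix.one_mul]
  -- `Q` is a symmetric idempotent, so `Q i i = ∑ j, (Q i j)^2 ≥ (Q i i)^2`.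
  have hsq : Q i i * Q i i ≤ Q i i := by
    calc Q i i * Q i i ≤ ∑ j, Q i j * Q j i := by
          simpa [Q, mul_apply, mul_comm] using
            single_le_sum (f := fun j => Q i j * Q i j) (fun j _ => mul_self_nonneg _)
              (mem_univ i)
      _ = Q i i := by rw [← mul_apply, hQQ]
  nlinarith [mul_transpose_apply_self_nonneg P i]

lemma trace_mul_transpose [Fintype n] [Fintype m] [DecidableEq m] {P : Matrix n m ℝ}
    (hP : Pᵀ * P = 1) : (P * Pᵀ).trace = Fintype.card m := by
  rw [trace_mul_comm, hP, trace_one]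

lemma transpose_one_submatrix_mul_mul_one_submatrix [Fintype n] [DecidableEq n] (f : m → n)
    (X : Matrix n n ℝ) :
    ((1 : Matrix n n ℝ).submatrix id f)ᵀ * X * (1 : Matrix n n ℝ).submatrix id f =
      X.submatrix f f := by
  ext i j
  simp [mul_apply, one_apply]

variable [Fintype n] [DecidableEq n] [Fintype m] [DecidableEq m]

theorem traceRayleighValues_conj {A : Matrix n n ℝ} (hA : IsUnit A) (M S : Matrix n n ℝ) :
    traceRayleighValues (Aᵀ * M * A) (Aᵀ * S * A) m = traceRayleighValues M S m := by
  ext r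
  constructor
  · rintro ⟨B, hB, rfl⟩
    exact ⟨A * B, by rwa [transpose_mul_mul_mul_conj], by rw [transpose_mul_mul_mul_conj]⟩
  · rintro ⟨C, hC, rfl⟩
    obtain ⟨A', hA'⟩ := hA.exists_right_inv
    have hC' : A * (A' * C) = C := by rw [← Matrix.mul_assoc, hA', Matrix.one_mul]
    exact ⟨A' * C, by rwa [← transpose_mul_mul_mul_conj, hC'],
      by rw [← transpose_mul_mul_mul_conj, hC']⟩

theorem IsHermitian.traceRayleighValues_one_eq_diagonal {A : Matrix n n ℝ} (hA : A.IsHermitian) :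
    traceRayleighValues A 1 m = traceRayleighValues (diagonal hA.eigenvalues) 1 m := by
  set U : Matrix n n ℝ := (hA.eigenvectorUnitary : Matrix n n ℝ)ᵀ
  have hUU : Uᵀ * U = 1 := by
    simpa [U, star_eq_conjTranspose] using Unitary.coe_mul_star_self hA.eigenvectorUnitary
  have hA_eq : A = Uᵀ * diagonal hA.eigenvalues * U := by
    simpa [U, Unitary.conjStarAlgAut_apply, star_eq_conjTranspose] using hA.spectral_theorem
  have := traceRayleighValues_conj (m := m) (.of_mul_eq_one_right _ hUU)
    (diagonal hA.eigenvalues) 1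
  rwa [Matrix.mul_one, hUU, ← hA_eq] at this

theorem isGreatest_traceRayleighValues_diagonal {p d : ℕ} (hdp : d ≤ p) (w : Fin p → ℝ)
    (e : Equiv.Perm (Fin p)) (he : Antitone (w ∘ e)) :
    IsGreatest (traceRayleighValues (diagonal w) 1 (Fin d))
      (∑ i ∈ univ.filter (fun i : Fin p => (i : ℕ) < d), w (e i)) := by
  constructor
  · set f : Fin d → Fin p := e ∘ Fin.castLE hdp
    have hf : f.Injective := e.injective.comp (Fin.castLE_injective hdp)
    refine ⟨(1 : Matrix (Fin p) (Fin p) ℝ).submatrix id f, ?_, ?_⟩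
    · rw [transpose_one_submatrix_mul_mul_one_submatrix, submatrix_one _ hf]
    · rw [transpose_one_submatrix_mul_mul_one_submatrix, submatrix_diagonal _ _ hf,
        trace_diagonal, Fin.sum_filter_val_lt hdp]
      rfl
  · rintro r ⟨P, hP, rfl⟩
    rw [Matrix.mul_one] at hP
    have hu : ∑ i, (P * Pᵀ) (e i) (e i) = d :=
      (Equiv.sum_comp e fun i => (P * Pᵀ) i i).trans
        ((trace_mul_transpose hP).trans (by rw [Fintype.card_fin]))
    rw [trace_transpose_mul_diagonal_mul, ← Equiv.sum_comp e]
    exact he.sum_mul_le_sum_filter_val_lt hdp (fun i => mul_transpose_apply_self_nonneg P _)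
      (fun i => mul_transpose_apply_self_le_one hP _) hu

end Matrix

theorem trace_rayleigh_generalized_general {p d : ℕ} (hdp : d ≤ p)
    (M S : Matrix (Fin p) (Fin p) ℝ)
    (sq : Matrix (Fin p) (Fin p) ℝ) (hsqPD : sq.PosDef) (hsq : sq * sq = S)
    (hN : (sq⁻¹ * M * sq⁻¹).IsHermitian)
    (e : Equiv.Perm (Fin p)) (he : Antitone (hN.eigenvalues ∘ e)) :
    IsGreatest
      {r : ℝ | ∃ B : Matrix (Fin p) (Fin d) ℝ, Bᵀ * S * B = 1 ∧ r = (Bᵀ * M * B).trace}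
      (∑ i ∈ Finset.univ.filter (fun i : Fin p => (i : ℕ) < d), hN.eigenvalues (e i)) := by
  have hsq_unit : IsUnit sq := hsqPD.isUnit
  have hdet : IsUnit sq.det := (isUnit_iff_isUnit_det sq).1 hsq_unit
  have hsqT : sqᵀ = sq := hsqPD.isHermitian
  have hM : sqᵀ * (sq⁻¹ * M * sq⁻¹) * sq = M := by
    rw [hsqT, ← Matrix.mul_assoc, ← Matrix.mul_assoc, mul_nonsing_inv _ hdet, Matrix.one_mul,
      Matrix.mul_assoc, nonsing_inv_mul _ hdet, Matrix.mul_one]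
  have hS : sqᵀ * 1 * sq = S := by rw [hsqT, Matrix.mul_one, hsq]
  have hvalues : traceRayleighValues M S (Fin d) =
      traceRayleighValues (diagonal hN.eigenvalues) 1 (Fin d) :=
    calc traceRayleighValues M S (Fin d)
        = traceRayleighValues (sqᵀ * (sq⁻¹ * M * sq⁻¹) * sq) (sqᵀ * 1 * sq) (Fin d) := by
          rw [hM, hS]
      _ = traceRayleighValues (sq⁻¹ * M * sq⁻¹) 1 (Fin d) :=
          traceRayleighValues_conj hsq_unit _ _
      _ = _ := hN.traceRayleighValues_one_eq_diagonal
  change IsGreatest (traceRayleighValues M S (Fin d)) _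
  rw [hvalues]
  exact isGreatest_traceRayleighValues_diagonal hdp _ e he

/-- The supremum of `trace(Bᵀ M B)` over `p×d` matrices `B` with `Bᵀ Σ B = I_d`
is attained and equals the sum of the `d` largest eigenvalues (with
multiplicity) of `Σ^{-1/2} M Σ^{-1/2}`, the eigenvalues being listed in
decreasing order via a permutation `e`. -/
theorem trace_rayleigh_generalized {p d : ℕ} (hd1 : 1 ≤ d) (hdp : d ≤ p)
    (M S : Matrix (Fin p) (Fin p) ℝ) (hM : M.IsSymm) (hS : S.PosDef)
    (sq : Matrix (Fin p) (Fin p) ℝ) (hsqPD : sq.PosDef) (hsq : sq * sq = S)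
    (hN : (sq⁻¹ * M * sq⁻¹).IsHermitian)
    (e : Equiv.Perm (Fin p)) (he : Antitone (hN.eigenvalues ∘ e)) :
    IsGreatest
      {r : ℝ | ∃ B : Matrix (Fin p) (Fin d) ℝ, Bᵀ * S * B = 1 ∧ r = (Bᵀ * M * B).trace}
      (∑ i ∈ Finset.univ.filter (fun i : Fin p => (i : ℕ) < d), hN.eigenvalues (e i)) :=
  trace_rayleigh_generalized_general hdp M S sq hsqPD hsq hN e he
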